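/- Let {B_n} and {C_n} be strictly increasing sequences of positive reals with B_1/B_2 ≤ C_1/C_2. If for every integer n ≥ 1, (B_{n+1} − B_n)/(B_{n+2} − B_{n+1}) ≤ (C_{n+1} − C_n)/(C_{n+2} − C_{n+1}), then B_n/B_{n+1} ≤ C_n/C_{n+1} for every integer n ≥ 1. -/
import Mathlib


theorem ratio_principle (B C : ℕ → ℝ)
    (hBpos : ∀ n, 1 ≤ n → 0 < B n) (hCpos : ∀ n, 1 ≤ n → 0 < C n)
    (hBmono : ∀ n, 1 ≤ n → B n < B (n + 1)) (hCmono : ∀ n, 1 ≤ n → C n < C (n + 1))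
    (hbase : B 1 / B 2 ≤ C 1 / C 2)
    (hstep : ∀ n, 1 ≤ n →
      (B (n + 1) - B n) / (B (n + 2) - B (n + 1)) ≤
        (C (n + 1) - C n) / (C (n + 2) - C (n + 1))) :
    ∀ n, 1 ≤ n → B n / B (n + 1) ≤ C n / C (n + 1) := by
  have key : ∀ n, 1 ≤ n → B n * (C (n + 1) - C n) ≤ C n * (B (n + 1) - B n) := by
    intro n hn
    induction n, hn using Nat.le_induction with
    | base =>
      have hB2 : 0 < B 2 := hBpos 2 (by norm_num)
      have hC2 : 0 < C 2 := hCpos 2 (by norm_num)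
      rw [div_le_div_iff₀ hB2 hC2] at hbase
      nlinarith
    | succ n hn ih =>
      have hs := hstep n hn
      have hb1 : 0 < B (n + 1) - B n := sub_pos.2 (hBmono n hn)
      have hb2 : 0 < B (n + 2) - B (n + 1) := sub_pos.2 (hBmono (n + 1) (by omega))
      have hc1 : 0 < C (n + 1) - C n := sub_pos.2 (hCmono n hn)
      have hc2 : 0 < C (n + 2) - C (n + 1) := sub_pos.2 (hCmono (n + 1) (by omega))
      rw [div_le_div_iff₀ hb2 hc2] at hs
      have hBn : 0 < B n := hBpos n hn
      have hCn : 0 < C n := hCpos n hn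
      -- from ih and hs: B n * (C (n+2) - C (n+1)) ≤ C n * (B (n+2) - B (n+1))
      have h1 : B n * (C (n + 2) - C (n + 1)) * (C (n + 1) - C n) ≤
          C n * (B (n + 2) - B (n + 1)) * (C (n + 1) - C n) := by nlinarith
      have h2 : B n * (C (n + 2) - C (n + 1)) ≤ C n * (B (n + 2) - B (n + 1)) :=
        le_of_mul_le_mul_right (by linarith [h1]) hc1
      nlinarith
  intro n hn
  have hB1 : 0 < B (n + 1) := hBpos (n + 1) (by omega)
  have hC1 : 0 < C (n + 1) := hCpos (n + 1) (by omega)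
  rw [div_le_div_iff₀ hB1 hC1]
  nlinarith [key n hn]
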